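/- arXiv:1602.08612 — 4 statements merged into one kernel-verified Lean document; each statement's English description precedes it below -/
import Mathlib

section
/- Let C > 0 and let (x_i)_{i≥1} be a non-increasing sequence of positive reals such that ∑_{i=1}^∞ x_i^{(N−s)/N} ≤ C and ∑_{i=1}^∞ x_i = 1/2. Then there exists k₀ ∈ ℕ such that for all k ≥ k₀, ∑_{i=k+1}^∞ x_i ≤ (2Ck)^{−s/N}. -/
open MeasureTheory Metric Set Filter
open scoped ENNReal NNReal symmDiff

/-- Fractional interaction energy between two sets. -/
noncomputable def interEnergy (N : ℕ) (s : ℝ) (A B : Set (EuclideanSpace ℝ (Fin N))) : ℝ≥0∞ :=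
  ∫⁻ x in A, ∫⁻ y in B, ENNReal.ofReal (1 / ‖x - y‖ ^ ((N : ℝ) + s))

/-- Fractional perimeter `P_s(E) = ∫_E ∫_{Eᶜ} |x-y|^{-(N+s)} dx dy`. -/
noncomputable def fracPer (N : ℕ) (s : ℝ) (E : Set (EuclideanSpace ℝ (Fin N))) : ℝ≥0∞ :=
  interEnergy N s E Eᶜ

/-!
Write `p = (N - s)/N` and `q = s/N`, so `p + q = 1` and `0 < p < 1`. Splitting
`x i = x i ^ p * x i ^ q ≤ x i ^ p * x k ^ q` for `i ≥ k` bounds the `k`-th tail by `C * x k ^ q`.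
Monotonicity gives `k * x k ^ p ≤ C`, i.e. `x k ^ q ≤ (C / k) ^ (q / p)`. Since `q / p > q`,
the resulting bound `C * (C / k) ^ (q / p)` decays faster than `(2 * C * k) ^ (-q)`.
-/

open Real

lemma Antitone.natCast_mul_le_tsum {f : ℕ → ℝ} (hf : Antitone f) (h0 : ∀ i, 0 ≤ f i)
    (hs : Summable f) (k : ℕ) : k * f k ≤ ∑' i, f i :=
  calc (k : ℝ) * f k = ∑ _i ∈ Finset.range k, f k := by simp
    _ ≤ ∑ i ∈ Finset.range k, f i :=
      Finset.sum_le_sum fun i hi => hf (Finset.mem_range.1 hi).le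
    _ ≤ ∑' i, f i := hs.sum_le_tsum _ fun i _ => h0 i

lemma tsum_nat_add_le_tsum_rpow_mul_rpow {x : ℕ → ℝ} (hx : ∀ i, 0 ≤ x i) (hmono : Antitone x)
    (hsum : Summable x) {p q : ℝ} (hsum_p : Summable fun i => x i ^ p) (hq : 0 ≤ q)
    (hpq : p + q = 1) (k : ℕ) : ∑' i, x (i + k) ≤ (∑' i, x i ^ p) * x k ^ q := by
  have hsum_p_tail : Summable fun i => x (i + k) ^ p := (summable_nat_add_iff k).2 hsum_p
  have hsplit (i : ℕ) : x (i + k) ≤ x (i + k) ^ p * x k ^ q :=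
    calc x (i + k) = x (i + k) ^ p * x (i + k) ^ q := by
          rw [← rpow_add' (hx _) (by rw [hpq]; exact one_ne_zero), hpq, rpow_one]
      _ ≤ x (i + k) ^ p * x k ^ q := by
          gcongr
          · exact rpow_nonneg (hx _) p
          · exact hx _
          · exact hmono (Nat.le_add_left k i)
  have htail_le : ∑' i, x (i + k) ^ p ≤ ∑' i, x i ^ p :=
    hsum_p_tail.tsum_le_tsum_of_inj (· + k) (add_left_injective k)
      (fun i _ => rpow_nonneg (hx i) p) (fun _ => le_rfl) hsum_p
  calc ∑' i, x (i + k) ≤ ∑' i, x (i + k) ^ p * x k ^ q :=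
        ((summable_nat_add_iff k).2 hsum).tsum_le_tsum hsplit (hsum_p_tail.mul_right _)
    _ = (∑' i, x (i + k) ^ p) * x k ^ q := tsum_mul_right
    _ ≤ (∑' i, x i ^ p) * x k ^ q := by gcongr; exact rpow_nonneg (hx k) q

lemma rpow_le_div_rpow_of_mul_rpow_le {y p q c k : ℝ} (hy : 0 ≤ y) (hp : 0 < p) (hq : 0 ≤ q)
    (hk : 0 < k) (h : k * y ^ p ≤ c) : y ^ q ≤ (c / k) ^ (q / p) := by
  have hyp : y ^ p ≤ c / k := (le_div_iff₀' hk).2 h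
  calc y ^ q = (y ^ p) ^ (q / p) := by rw [← rpow_mul hy, mul_div_cancel₀ q hp.ne']
    _ ≤ (c / k) ^ (q / p) := rpow_le_rpow (rpow_nonneg hy p) hyp (div_nonneg hq hp.le)

lemma eventually_mul_div_rpow_le_mul_rpow_neg {c d a b : ℝ} (hc : 0 < c) (hd : 0 < d)
    (hba : b < a) : ∀ᶠ k : ℝ in atTop, c * (c / k) ^ a ≤ (d * k) ^ (-b) := by
  filter_upwards [(tendsto_rpow_atTop (sub_pos.2 hba)).eventually_ge_atTop
    (c ^ (1 + a) * d ^ b), eventually_gt_atTop 0] with k hk hk0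
  have hlhs : c * (c / k) ^ a = c ^ (1 + a) / k ^ a := by
    rw [div_rpow hc.le hk0.le, rpow_add hc, rpow_one, mul_div_assoc]
  have hrhs : (d * k) ^ (-b) = 1 / (d ^ b * k ^ b) := by
    rw [rpow_neg (by positivity), mul_rpow hd.le hk0.le, one_div]
  rw [hlhs, hrhs, div_le_div_iff₀ (by positivity) (by positivity)]
  calc c ^ (1 + a) * (d ^ b * k ^ b) = c ^ (1 + a) * d ^ b * k ^ b := by ring
    _ ≤ k ^ (a - b) * k ^ b := by gcongr
    _ = 1 * k ^ a := by rw [← rpow_add hk0, sub_add_cancel, one_mul]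

theorem tail_sum_bound_general (N : ℕ) (hN : 1 ≤ N) (s : ℝ) (hs : s ∈ Set.Ioo (0:ℝ) 1)
    (C : ℝ) (hC : 0 < C) (x : ℕ → ℝ) (hpos : ∀ i, 0 < x i) (hmono : Antitone x)
    (hsummable : Summable x)
    (hsummable' : Summable (fun i => x i ^ (((N : ℝ) - s) / N)))
    (hsum1 : ∑' i, x i ^ (((N : ℝ) - s) / N) ≤ C) :
    ∃ k₀ : ℕ, ∀ k ≥ k₀, ∑' i, x (i + k) ≤ (2 * C * k) ^ (-(s / N)) := by
  obtain ⟨hs0, hs1⟩ := hs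
  have hN1 : (1 : ℝ) ≤ N := by exact_mod_cast hN
  set p := ((N : ℝ) - s) / N
  have hp0 : 0 < p := div_pos (by linarith) (by linarith)
  have hq0 : 0 < s / N := div_pos hs0 (by linarith)
  have hpq : p + s / N = 1 := by simp only [p]; field_simp; ring
  have hq_lt : s / N < s / N / p :=
    lt_div_iff₀ hp0 |>.2 (mul_lt_of_lt_one_right hq0 (by linarith))
  have hx : ∀ i, 0 ≤ x i := fun i => (hpos i).le
  obtain ⟨k₀, hk₀⟩ := eventually_atTop.1 <| tendsto_natCast_atTop_atTop.eventually
    (eventually_mul_div_rpow_le_mul_rpow_neg hC (by positivity : (0 : ℝ) < 2 * C) hq_lt)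
  refine ⟨max k₀ 1, fun k hk => ?_⟩
  have hk0 : (0 : ℝ) < k := by exact_mod_cast (le_max_right k₀ 1).trans hk
  have hxk : x k ^ (s / N) ≤ (C / k) ^ (s / N / p) :=
    rpow_le_div_rpow_of_mul_rpow_le (hx k) hp0 hq0.le hk0 <|
      (Antitone.natCast_mul_le_tsum (fun i j hij => rpow_le_rpow (hx j) (hmono hij) hp0.le)
        (fun i => rpow_nonneg (hx i) p) hsummable' k).trans hsum1
  calc ∑' i, x (i + k) ≤ (∑' i, x i ^ p) * x k ^ (s / N) :=
        tsum_nat_add_le_tsum_rpow_mul_rpow hx hmono hsummable hsummable' hq0.le hpq k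
    _ ≤ C * (C / k) ^ (s / N / p) := by gcongr; exact rpow_nonneg (hx k) _
    _ ≤ (2 * C * k) ^ (-(s / N)) := hk₀ k ((le_max_left k₀ 1).trans hk)

theorem tail_sum_bound (N : ℕ) (hN : 1 ≤ N) (s : ℝ) (hs : s ∈ Set.Ioo (0:ℝ) 1)
    (C : ℝ) (hC : 0 < C) (x : ℕ → ℝ) (hpos : ∀ i, 0 < x i) (hmono : Antitone x)
    (hsummable : Summable x)
    (hsummable' : Summable (fun i => x i ^ (((N : ℝ) - s) / N)))
    (hsum1 : ∑' i, x i ^ (((N : ℝ) - s) / N) ≤ C) (hsum2 : ∑' i, x i = 1 / 2) :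
    ∃ k₀ : ℕ, ∀ k ≥ k₀, ∑' i, x (i + k) ≤ (2 * C * k) ^ (-(s / N)) :=
  tail_sum_bound_general N hN s hs C hC x hpos hmono hsummable hsummable' hsum1
end

section
/- Let f : [0,∞) → [0,∞) be non-increasing with f(r) → 0 as r → ∞, f locally absolutely continuous, satisfying for some c > 0 the integro-differential inequality c ∫_R^∞ f(r)^{(N−s)/N} dr ≤ f(R) for all R ≥ R₂. Then there exists R̄ such that f(r) = 0 for all r ≥ R̄. -/
open MeasureTheory Metric Set Filter
open scoped ENNReal NNReal symmDiff

/-!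
Write `g(R) = ∫_R^∞ f^α` with `α = (N - s)/N ∈ (0,1)`. Since `f ≥ c g` and `g` is non-increasing,
`g(R) - g(b) ≥ (b - R) (c g(b))^α`: a discrete form of `g' ≤ -c^α g^α`. With `α < 1` this
sublinear decay halves `g` over a step of length `≍ g^{1-α}`; these lengths form a convergent
geometric series, so `g` vanishes at some finite `R̄`, and then so does the non-increasing `f`
beyond `R̄`.
-/

theorem le_half_of_add_mul_rpow_le {y h K α : ℝ} (hα : 0 ≤ α) (hK : 0 < K) (hh : 0 ≤ h)
    (hy : y + (h / 2) ^ (1 - α) / K * (K * y ^ α) ≤ h) : y ≤ h / 2 := by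
  by_contra! hlt
  have hh2 : 0 ≤ h / 2 := by positivity
  have : h / 2 ≤ (h / 2) ^ (1 - α) / K * (K * y ^ α) :=
    calc h / 2 = (h / 2) ^ (1 - α) * (h / 2) ^ α := by
          rw [← Real.rpow_add' hh2 (by norm_num), sub_add_cancel, Real.rpow_one]
      _ = (h / 2) ^ (1 - α) / K * (K * (h / 2) ^ α) := by field_simp
      _ ≤ (h / 2) ^ (1 - α) / K * (K * y ^ α) := by gcongr
  linarith

theorem exists_eq_zero_of_add_mul_rpow_le {g : ℝ → ℝ} {a K α : ℝ} (hK : 0 < K) (hα0 : 0 ≤ α)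
    (hα1 : α < 1) (hg0 : ∀ R ≥ a, 0 ≤ g R)
    (hdecay : ∀ R b, a ≤ R → R ≤ b → g b + (b - R) * (K * g b ^ α) ≤ g R) :
    ∃ b ≥ a, g b = 0 := by
  have hga : 0 ≤ g a := hg0 a le_rfl
  have hanti : ∀ R b, a ≤ R → R ≤ b → g b ≤ g R := fun R b hR hRb => by
    have := hdecay R b hR hRb
    have : 0 ≤ (b - R) * (K * g b ^ α) :=
      mul_nonneg (sub_nonneg.2 hRb) (mul_nonneg hK.le (Real.rpow_nonneg (hg0 b (hR.trans hRb)) α))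
    linarith
  set q : ℝ := (2 ^ (1 - α))⁻¹
  have hq0 : 0 ≤ q := by positivity
  have hq1 : q < 1 := inv_lt_one_of_one_lt₀ (Real.one_lt_rpow (by norm_num) (by linarith))
  set d : ℕ → ℝ := fun k => (g a / 2 ^ (k + 1)) ^ (1 - α) / K
  have hd0 : ∀ k, 0 ≤ d k := fun k => div_nonneg (Real.rpow_nonneg (by positivity) _) hK.le
  have hd : d = fun k => g a ^ (1 - α) / K * q * q ^ k := by
    ext k
    simp only [d, q]
    rw [Real.div_rpow hga (by positivity), ← Real.rpow_pow_comm (by norm_num), inv_pow, pow_succ]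
    ring
  have hsum : Summable d := hd ▸ (summable_geometric_of_lt_one hq0 hq1).mul_left _
  set R : ℕ → ℝ := fun n => a + ∑ k ∈ Finset.range n, d k
  have haR : ∀ n, a ≤ R n := fun n => le_add_of_nonneg_right (Finset.sum_nonneg fun k _ => hd0 k)
  have hRsucc : ∀ n, R (n + 1) = R n + d n := fun n => by
    simp only [R, Finset.sum_range_succ, add_assoc]
  have hgR : ∀ n, g (R n) ≤ g a / 2 ^ n := by
    intro n
    induction n with
    | zero => simp [R]
    | succ n ih =>
      have hstep := hdecay (R n) (R (n + 1)) (haR n) (by rw [hRsucc]; linarith [hd0 n])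
      rw [hRsucc, add_sub_cancel_left] at hstep
      rw [pow_succ, ← div_div]
      have hdn : d n = (g a / 2 ^ n / 2) ^ (1 - α) / K := by simp only [d, pow_succ, div_div]
      refine le_half_of_add_mul_rpow_le hα0 hK (by positivity) ?_
      rw [hRsucc, ← hdn]
      linarith
  set b := a + ∑' k, d k
  have hRb : ∀ n, R n ≤ b := fun n =>
    add_le_add_right (hsum.sum_le_tsum _ fun k _ => hd0 k) a
  have hab : a ≤ b := (haR 0).trans (hRb 0)
  refine ⟨b, hab, le_antisymm ?_ (hg0 b hab)⟩
  have hlim : Tendsto (fun n : ℕ => g a / 2 ^ n) atTop (nhds 0) :=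
    tendsto_const_nhds.div_atTop (tendsto_pow_atTop_atTop_of_one_lt one_lt_two)
  exact ge_of_tendsto' hlim fun n => (hanti _ _ (haR n) (hRb n)).trans (hgR n)

theorem add_mul_le_setIntegral_Ioi {F : ℝ → ℝ} {R b m : ℝ} (hRb : R ≤ b)
    (hF : IntegrableOn F (Ioi R)) (hm : ∀ x ∈ Ioc R b, m ≤ F x) :
    (∫ x in Ioi b, F x) + (b - R) * m ≤ ∫ x in Ioi R, F x := by
  have hsplit : ∫ x in Ioi R, F x = (∫ x in Ioc R b, F x) + ∫ x in Ioi b, F x := by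
    rw [← Ioc_union_Ioi_eq_Ioi hRb, setIntegral_union Ioc_disjoint_Ioi_same measurableSet_Ioi
      (hF.mono_set Ioc_subset_Ioi_self) (hF.mono_set (Ioi_subset_Ioi hRb))]
  have hlow : m * volume.real (Ioc R b) ≤ ∫ x in Ioc R b, F x :=
    setIntegral_ge_of_const_le_real measurableSet_Ioc measure_Ioc_lt_top.ne hm
      (hF.mono_set Ioc_subset_Ioi_self)
  rw [Real.volume_real_Ioc_of_le hRb] at hlow
  linarith

theorem setIntegral_Ioi_add_mul_rpow_le {F : ℝ → ℝ} {a K α : ℝ} (hK : 0 ≤ K) (hα : 0 ≤ α)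
    (hF0 : ∀ x > a, 0 ≤ F x) (hF : IntegrableOn F (Ioi a))
    (hlow : ∀ x ≥ a, K * (∫ t in Ioi x, F t) ^ α ≤ F x) {R b : ℝ} (hR : a ≤ R) (hRb : R ≤ b) :
    (∫ t in Ioi b, F t) + (b - R) * (K * (∫ t in Ioi b, F t) ^ α) ≤ ∫ t in Ioi R, F t := by
  refine add_mul_le_setIntegral_Ioi hRb (hF.mono_set (Ioi_subset_Ioi hR)) fun x hx => ?_
  have hxa : a ≤ x := hR.trans hx.1.le
  have htail0 : 0 ≤ ∫ t in Ioi b, F t :=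
    setIntegral_nonneg measurableSet_Ioi fun t ht => hF0 t (hxa.trans_lt (hx.2.trans_lt ht))
  have htail : ∫ t in Ioi b, F t ≤ ∫ t in Ioi x, F t := by
    simpa using add_mul_le_setIntegral_Ioi (m := 0) hx.2 (hF.mono_set (Ioi_subset_Ioi hxa))
      fun t ht => hF0 t (hxa.trans_lt ht.1)
  calc K * (∫ t in Ioi b, F t) ^ α ≤ K * (∫ t in Ioi x, F t) ^ α := by gcongr
    _ ≤ F x := hlow x hxa

theorem extinction_of_integrodifferential_ineq_general (N : ℕ) (hN : 1 ≤ N) (s : ℝ)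
    (hs : s ∈ Set.Ioo (0:ℝ) 1) (c R₂ : ℝ) (hc : 0 < c) (hR₂ : 0 ≤ R₂)
    (f : ℝ → ℝ) (hf0 : ∀ r ≥ (0:ℝ), 0 ≤ f r) (hmono : AntitoneOn f (Set.Ici 0))
    (hint : IntegrableOn (fun r => f r ^ (((N : ℝ) - s) / N)) (Set.Ioi R₂))
    (hineq : ∀ R ≥ R₂, c * ∫ r in Set.Ioi R, f r ^ (((N : ℝ) - s) / N) ≤ f R) :
    ∃ Rbar : ℝ, ∀ r ≥ Rbar, f r = 0 := by
  set α : ℝ := ((N : ℝ) - s) / N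
  have hN1 : (1 : ℝ) ≤ N := by exact_mod_cast hN
  have hα0 : 0 < α := div_pos (by linarith [hs.2]) (by linarith)
  have hα1 : α < 1 := (div_lt_one (by linarith)).2 (by linarith [hs.1])
  have hF0 : ∀ x > R₂, 0 ≤ f x ^ α := fun x hx => Real.rpow_nonneg (hf0 x (by linarith)) α
  have htail0 : ∀ x ≥ R₂, 0 ≤ ∫ t in Ioi x, f t ^ α := fun x hx =>
    setIntegral_nonneg measurableSet_Ioi fun t ht => hF0 t (hx.trans_lt ht)
  have hlow : ∀ x ≥ R₂, c ^ α * (∫ t in Ioi x, f t ^ α) ^ α ≤ f x ^ α := fun x hx => by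
    rw [← Real.mul_rpow hc.le (htail0 x hx)]
    exact Real.rpow_le_rpow (mul_nonneg hc.le (htail0 x hx)) (hineq x hx) hα0.le
  obtain ⟨Rb, hRb, hzero⟩ := exists_eq_zero_of_add_mul_rpow_le (Real.rpow_pos_of_pos hc α)
    hα0.le hα1 htail0 fun R b hR hRb =>
      setIntegral_Ioi_add_mul_rpow_le (Real.rpow_nonneg hc.le α) hα0.le hF0 hint hlow hR hRb
  refine ⟨Rb + 1, fun r hr => ?_⟩
  have hr0 : 0 ≤ r := by linarith
  have hbound := add_mul_le_setIntegral_Ioi (m := f r ^ α) (by linarith : Rb ≤ r)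
    (hint.mono_set (Ioi_subset_Ioi hRb)) fun x hx =>
      Real.rpow_le_rpow (hf0 r hr0) (hmono (mem_Ici.2 (by linarith [hx.1])) hr0 hx.2) hα0.le
  rw [hzero] at hbound
  have hfr : f r ^ α = 0 := by
    nlinarith [htail0 r (by linarith), Real.rpow_nonneg (hf0 r hr0) α]
  exact (Real.rpow_eq_zero (hf0 r hr0) hα0.ne').1 hfr

theorem extinction_of_integrodifferential_ineq (N : ℕ) (hN : 1 ≤ N) (s : ℝ)
    (hs : s ∈ Set.Ioo (0:ℝ) 1) (c R₂ : ℝ) (hc : 0 < c) (hR₂ : 0 ≤ R₂)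
    (f : ℝ → ℝ) (hf0 : ∀ r ≥ (0:ℝ), 0 ≤ f r) (hmono : AntitoneOn f (Set.Ici 0))
    (hcont : ContinuousOn f (Set.Ici 0))
    (hlim : Tendsto f atTop (nhds 0))
    (hint : IntegrableOn (fun r => f r ^ (((N : ℝ) - s) / N)) (Set.Ioi R₂))
    (hineq : ∀ R ≥ R₂, c * ∫ r in Set.Ioi R, f r ^ (((N : ℝ) - s) / N) ≤ f R) :
    ∃ Rbar : ℝ, ∀ r ≥ Rbar, f r = 0 :=
  extinction_of_integrodifferential_ineq_general N hN s hs c R₂ hc hR₂ f hf0 hmono hint hineq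
end

section
/- Let T : ℝ^N → ℝ^N be a C¹ vector field with compact support, and for t ∈ ℝ let Φ_t(x) = x + tT(x). Then there exists a constant C > 0 (depending on T, N, s) such that for all measurable E with P_s(E) < ∞ and all sufficiently small |t|, P_s(E)(1 − C|t|) ≤ P_s(Φ_t(E)) ≤ P_s(E)(1 + C|t|). -/
open MeasureTheory Metric Set Filter
open scoped ENNReal NNReal symmDiff

/-!
Let `T` be `K`-Lipschitz and `ε = |t| K ≤ 1/2`. Then `Φ_t = id + t • T` approximates the identity,
so it is onto, and both `Φ_t` and every derivative `DΦ_t(x)` distort lengths by at most the factor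
`L = 1 + 2ε`. Comparing volumes of balls, `|det DΦ_t(x)|` lies between `L^(-N)` and `L^N`.
Changing variables `x ↦ Φ_t x`, `y ↦ Φ_t y` in the double integral defining `P_s(Φ_t E)` produces
two such Jacobians and a kernel within a factor `L^(N+s)` of the original one, so `P_s(Φ_t E)`
lies between `L^(-(3N+s)) P_s(E)` and `L^(3N+s) P_s(E)`, and `L^(3N+s) ≤ 1 + C|t|`.
-/

section Determinant

variable {E : Type*} [NormedAddCommGroup E] [NormedSpace ℝ E] [FiniteDimensional ℝ E]

theorem ContinuousLinearMap.abs_det_le_pow_finrank (B : E →L[ℝ] E) {a : ℝ} (ha : 0 ≤ a)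
    (hB : ∀ x, ‖B x‖ ≤ a * ‖x‖) : |B.det| ≤ a ^ Module.finrank ℝ E := by
  borelize E
  let μ : Measure E := Measure.addHaar
  have hsub : B '' closedBall 0 1 ⊆ closedBall 0 a := by
    rintro _ ⟨x, hx, rfl⟩
    rw [mem_closedBall_zero_iff] at hx ⊢
    exact (hB x).trans (mul_le_of_le_one_right ha hx)
  have := measure_mono (μ := μ) hsub
  rwa [μ.addHaar_image_continuousLinearMap, μ.addHaar_closedBall' _ ha,
    ENNReal.mul_le_mul_iff_left (measure_closedBall_pos μ 0 one_pos).ne'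
      measure_closedBall_lt_top.ne, ENNReal.ofReal_le_ofReal_iff (by positivity)] at this

theorem ContinuousLinearMap.pow_finrank_le_abs_det (B : E →L[ℝ] E) {a : ℝ} (ha : 0 < a)
    (hB : ∀ x, a * ‖x‖ ≤ ‖B x‖) : a ^ Module.finrank ℝ E ≤ |B.det| := by
  have hinj : Function.Injective B := by
    refine (injective_iff_map_eq_zero B).2 fun x hx => ?_
    have := hB x
    rw [hx, norm_zero] at this
    exact norm_le_zero_iff.1 (nonpos_of_mul_nonpos_right this ha)
  have hsurj : Function.Surjective B := LinearMap.injective_iff_surjective.1 hinj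
  borelize E
  let μ : Measure E := Measure.addHaar
  have hsub : closedBall 0 a ⊆ B '' closedBall 0 1 := by
    intro y hy
    obtain ⟨x, rfl⟩ := hsurj y
    refine ⟨x, ?_, rfl⟩
    rw [mem_closedBall_zero_iff] at hy ⊢
    exact le_of_mul_le_mul_left ((hB x).trans (hy.trans (mul_one a).symm.le)) ha
  have := measure_mono (μ := μ) hsub
  rwa [μ.addHaar_image_continuousLinearMap, μ.addHaar_closedBall' _ ha.le,
    ENNReal.mul_le_mul_iff_left (measure_closedBall_pos μ 0 one_pos).ne'
      measure_closedBall_lt_top.ne, ENNReal.ofReal_le_ofReal_iff (abs_nonneg _)] at this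

end Determinant

theorem HasFDerivAt.mul_norm_le_norm_apply {E F : Type*} [NormedAddCommGroup E]
    [NormedSpace ℝ E] [NormedAddCommGroup F] [NormedSpace ℝ F] {f : E → F} {f' : E →L[ℝ] F}
    {x : E} (hf : HasFDerivAt f f' x) {c : ℝ} (hc : ∀ y, c * ‖y - x‖ ≤ ‖f y - f x‖) (v : E) :
    c * ‖v‖ ≤ ‖f' v‖ := by
  have hline : HasDerivAt (fun h : ℝ => f (x + h • v)) (f' v) 0 := by
    have hx : HasFDerivAt f f' (x + (0 : ℝ) • v) := by simpa using hf
    exact hx.comp_hasDerivAt (0 : ℝ)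
      (by simpa using ((hasDerivAt_id (0 : ℝ)).smul_const v).const_add x)
  refine ge_of_tendsto hline.tendsto_slope.norm (eventually_nhdsWithin_of_forall fun h hh => ?_)
  have := hc (x + h • v)
  rw [add_sub_cancel_left, norm_smul, mul_left_comm] at this
  rw [slope_def_module, zero_smul, add_zero, sub_zero, norm_smul, norm_inv,
    le_inv_mul_iff₀ (norm_pos_iff.2 hh)]
  exact this

theorem one_add_pow_le_one_add_mul {a : ℝ} (h0 : 0 ≤ a) (h1 : a ≤ 1) (n : ℕ) :
    (1 + a) ^ n ≤ 1 + (2 ^ n - 1) * a := by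
  have := (convexOn_pow n).2 (mem_Ici.2 zero_le_one) (mem_Ici.2 zero_le_two)
    (sub_nonneg.2 h1) h0 (sub_add_cancel 1 a)
  simp only [smul_eq_mul] at this
  calc (1 + a) ^ n = ((1 - a) * 1 + a * 2) ^ n := by ring
    _ ≤ (1 - a) * 1 ^ n + a * 2 ^ n := this
    _ = 1 + (2 ^ n - 1) * a := by ring

theorem one_add_two_mul_rpow_le {ε q : ℝ} {n : ℕ} (h0 : 0 ≤ ε) (h1 : ε ≤ 1 / 2) (hq : q ≤ n) :
    (1 + 2 * ε) ^ q ≤ 1 + 2 ^ (n + 1) * ε := by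
  calc (1 + 2 * ε) ^ q ≤ (1 + 2 * ε) ^ (n : ℝ) :=
        Real.rpow_le_rpow_of_exponent_le (by linarith) hq
    _ = (1 + 2 * ε) ^ n := Real.rpow_natCast _ n
    _ ≤ 1 + (2 ^ n - 1) * (2 * ε) := one_add_pow_le_one_add_mul (by linarith) (by linarith) n
    _ ≤ 1 + 2 ^ (n + 1) * ε := by rw [pow_succ]; nlinarith

theorem one_sub_le_inv_of_le_one_add {a c : ℝ} (hc : 0 < c) (h : c ≤ 1 + a) : 1 - a ≤ c⁻¹ := by
  rcases le_or_gt a 1 with ha | ha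
  · rw [← one_div, le_div_iff₀ hc]
    nlinarith [mul_le_mul_of_nonneg_left h (sub_nonneg.2 ha), sq_nonneg a]
  · exact (sub_neg.2 ha).le.trans (inv_pos.2 hc).le

theorem norm_bounds_of_norm_sub_le {E : Type*} [SeminormedAddCommGroup E] {u w : E} {ε : ℝ}
    (h0 : 0 ≤ ε) (h1 : ε ≤ 1 / 2) (h : ‖u - w‖ ≤ ε * ‖w‖) :
    (1 + 2 * ε)⁻¹ * ‖w‖ ≤ ‖u‖ ∧ ‖u‖ ≤ (1 + 2 * ε) * ‖w‖ := by
  have hlo : ‖w‖ - ‖u‖ ≤ ‖u - w‖ := by simpa [norm_sub_rev] using norm_sub_norm_le w u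
  have hhi : ‖u‖ ≤ ‖u - w‖ + ‖w‖ := by simpa using norm_add_le (u - w) w
  constructor
  · rw [inv_mul_le_iff₀ (by linarith)]
    nlinarith [norm_nonneg w, norm_nonneg u]
  · nlinarith [norm_nonneg w]

section Perturbation

variable {E : Type*} [NormedAddCommGroup E] [NormedSpace ℝ E] {T : E → E} {K : ℝ≥0}

theorem LipschitzWith.approximatesLinearOn_add_smul (hT : LipschitzWith K T) (t : ℝ) :
    ApproximatesLinearOn (fun x => x + t • T x) (ContinuousLinearMap.id ℝ E) univ (‖t‖₊ * K) := by
  intro x _ y _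
  have : x + t • T x - (y + t • T y) - (x - y) = t • (T x - T y) := by rw [smul_sub]; abel
  rw [ContinuousLinearMap.id_apply, this, norm_smul, NNReal.coe_mul, coe_nnnorm, mul_assoc]
  exact mul_le_mul_of_nonneg_left (hT.norm_sub_le x y) (norm_nonneg t)

theorem LipschitzWith.surjective_add_smul [CompleteSpace E] (hT : LipschitzWith K T) {t : ℝ}
    (ht : |t| * K < 1) : Function.Surjective (fun x => x + t • T x) := by
  refine (hT.approximatesLinearOn_add_smul t).surjective (f' := ContinuousLinearEquiv.refl ℝ E)
    ((subsingleton_or_nontrivial E).imp id fun _ : Nontrivial E => ?_)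
  rwa [ContinuousLinearEquiv.refl_symm, ContinuousLinearEquiv.coe_refl,
    ContinuousLinearMap.nnnorm_id, inv_one, ← NNReal.coe_lt_coe, NNReal.coe_mul, coe_nnnorm,
    Real.norm_eq_abs, NNReal.coe_one]

theorem LipschitzWith.norm_add_smul_sub_bounds (hT : LipschitzWith K T) {t : ℝ}
    (ht : |t| * K ≤ 1 / 2) (x y : E) :
    (1 + 2 * (|t| * K))⁻¹ * ‖x - y‖ ≤ ‖x + t • T x - (y + t • T y)‖ ∧
      ‖x + t • T x - (y + t • T y)‖ ≤ (1 + 2 * (|t| * K)) * ‖x - y‖ :=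
  norm_bounds_of_norm_sub_le (by positivity) ht
    (by simpa using hT.approximatesLinearOn_add_smul t x (mem_univ x) y (mem_univ y))

end Perturbation

theorem one_div_rpow_le_rpow_mul {L p r r' : ℝ} (hL : 0 < L) (hp : 0 ≤ p) (hr : 0 < r)
    (h : L⁻¹ * r ≤ r') : 1 / r' ^ p ≤ L ^ p * (1 / r ^ p) := by
  have hLr : 0 < L⁻¹ * r := by positivity
  calc 1 / r' ^ p ≤ 1 / (L⁻¹ * r) ^ p :=
        one_div_le_one_div_of_le (by positivity) (Real.rpow_le_rpow hLr.le h hp)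
    _ = L ^ p * (1 / r ^ p) := by
        rw [Real.mul_rpow (inv_nonneg.2 hL.le) hr.le, Real.inv_rpow hL.le]
        field_simp

theorem one_div_rpow_bounds {L p r r' : ℝ} (hL : 0 < L) (hp : 0 < p) (hr : 0 ≤ r)
    (hlo : L⁻¹ * r ≤ r') (hhi : r' ≤ L * r) :
    L⁻¹ ^ p * (1 / r ^ p) ≤ 1 / r' ^ p ∧ 1 / r' ^ p ≤ L ^ p * (1 / r ^ p) := by
  rcases hr.eq_or_lt with rfl | hr
  · obtain rfl : r' = 0 := le_antisymm (by simpa using hhi) (by simpa using hlo)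
    simp [Real.zero_rpow hp.ne']
  have hr' : 0 < r' := (by positivity : 0 < L⁻¹ * r).trans_le hlo
  refine ⟨?_, one_div_rpow_le_rpow_mul hL hp.le hr hlo⟩
  have := one_div_rpow_le_rpow_mul hL hp.le hr' (by rwa [inv_mul_le_iff₀ hL] : L⁻¹ * r' ≤ r)
  calc L⁻¹ ^ p * (1 / r ^ p) ≤ L⁻¹ ^ p * (L ^ p * (1 / r' ^ p)) := by gcongr
    _ = 1 / r' ^ p := by
        rw [← mul_assoc, ← Real.mul_rpow (inv_nonneg.2 hL.le) hL.le, inv_mul_cancel₀ hL.ne',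
          Real.one_rpow, one_mul]

theorem injective_of_mul_norm_sub_le {E F : Type*} [NormedAddCommGroup E] [NormedAddCommGroup F]
    {f : E → F} {c : ℝ} (hc : 0 < c) (h : ∀ x y, c * ‖x - y‖ ≤ ‖f x - f y‖) :
    Function.Injective f := fun x y hxy => by
  have := h x y
  rw [hxy, sub_self, norm_zero] at this
  exact sub_eq_zero.1 (norm_le_zero_iff.1 (nonpos_of_mul_nonpos_right this hc))

section Energy

variable {N : ℕ} {s : ℝ} {f : EuclideanSpace ℝ (Fin N) → EuclideanSpace ℝ (Fin N)}

theorem interEnergy_image_eq {f' : EuclideanSpace ℝ (Fin N) → EuclideanSpace ℝ (Fin N) →L[ℝ]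
    EuclideanSpace ℝ (Fin N)} (hf : ∀ x, HasFDerivAt f (f' x) x) (hinj : Function.Injective f)
    {A B : Set (EuclideanSpace ℝ (Fin N))} (hA : MeasurableSet A) (hB : MeasurableSet B) :
    interEnergy N s (f '' A) (f '' B) = ∫⁻ x in A, ∫⁻ y in B, ENNReal.ofReal
      (|(f' x).det| * |(f' y).det| * (1 / ‖f x - f y‖ ^ ((N : ℝ) + s))) := by
  have hcov : ∀ {S}, MeasurableSet S → ∀ g : EuclideanSpace ℝ (Fin N) → ℝ≥0∞,
      ∫⁻ x in f '' S, g x = ∫⁻ x in S, ENNReal.ofReal |(f' x).det| * g (f x) :=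
    fun hS g => lintegral_image_eq_lintegral_abs_det_fderiv_mul volume hS
      (fun x _ => (hf x).hasFDerivWithinAt) hinj.injOn g
  simp_rw [interEnergy, hcov hA, hcov hB, ← lintegral_const_mul' _ _ ENNReal.ofReal_ne_top,
    ← ENNReal.ofReal_mul (abs_nonneg _), ← mul_assoc]

variable (hf : Differentiable ℝ f) {L : ℝ} (hL : 0 < L)
  (hdist : ∀ x y, L⁻¹ * ‖x - y‖ ≤ ‖f x - f y‖ ∧ ‖f x - f y‖ ≤ L * ‖x - y‖)
include hf hL hdist

theorem interEnergy_image_bounds (hs : 0 < s) {A B : Set (EuclideanSpace ℝ (Fin N))}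
    (hA : MeasurableSet A) (hB : MeasurableSet B) :
    ENNReal.ofReal (L⁻¹ ^ (3 * N + s)) * interEnergy N s A B ≤
        interEnergy N s (f '' A) (f '' B) ∧
      interEnergy N s (f '' A) (f '' B) ≤
        ENNReal.ofReal (L ^ (3 * N + s)) * interEnergy N s A B := by
  set p : ℝ := N + s with hp_def
  have hdet : ∀ x, L⁻¹ ^ N ≤ |(fderiv ℝ f x).det| ∧ |(fderiv ℝ f x).det| ≤ L ^ N := by
    intro x
    have hfx := (hf x).hasFDerivAt
    have hlo := (fderiv ℝ f x).pow_finrank_le_abs_det (inv_pos.2 hL)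
      (hfx.mul_norm_le_norm_apply fun y => (hdist y x).1)
    have hhi := (fderiv ℝ f x).abs_det_le_pow_finrank hL.le fun v =>
      (fderiv ℝ f x).le_of_opNorm_le (hfx.le_of_lip' hL.le (.of_forall fun y => (hdist y x).2)) v
    rw [finrank_euclideanSpace_fin] at hlo hhi
    exact ⟨hlo, hhi⟩
  have hker x y := one_div_rpow_bounds (p := p) hL (by positivity) (norm_nonneg _)
    (hdist x y).1 (hdist x y).2
  have hsplit : ∀ c : ℝ, 0 < c → c ^ (3 * N + s) = c ^ N * c ^ N * c ^ p := by
    intro c hc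
    rw [← Real.rpow_natCast, ← Real.rpow_add hc, ← Real.rpow_add hc, hp_def]
    ring_nf
  have hpt : ∀ x y, ENNReal.ofReal (L⁻¹ ^ (3 * N + s)) * ENNReal.ofReal (1 / ‖x - y‖ ^ p) ≤
        ENNReal.ofReal (|(fderiv ℝ f x).det| * |(fderiv ℝ f y).det| * (1 / ‖f x - f y‖ ^ p)) ∧
      ENNReal.ofReal (|(fderiv ℝ f x).det| * |(fderiv ℝ f y).det| * (1 / ‖f x - f y‖ ^ p)) ≤
        ENNReal.ofReal (L ^ (3 * N + s)) * ENNReal.ofReal (1 / ‖x - y‖ ^ p) := by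
    intro x y
    rw [← ENNReal.ofReal_mul (by positivity), ← ENNReal.ofReal_mul (by positivity),
      hsplit _ (inv_pos.2 hL), hsplit _ hL, mul_assoc, mul_assoc (L ^ N * L ^ N)]
    constructor <;> refine ENNReal.ofReal_le_ofReal ?_ <;> gcongr ?_ * ?_ * ?_
    exacts [(hdet x).1, (hdet y).1, (hker x y).1, (hdet x).2, (hdet y).2, (hker x y).2]
  rw [interEnergy_image_eq (fun x => (hf x).hasFDerivAt)
    (injective_of_mul_norm_sub_le (inv_pos.2 hL) fun x y => (hdist x y).1) hA hB, interEnergy]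
  simp_rw [← lintegral_const_mul' _ _ ENNReal.ofReal_ne_top]
  exact ⟨lintegral_mono fun x => lintegral_mono fun y => (hpt x y).1,
    lintegral_mono fun x => lintegral_mono fun y => (hpt x y).2⟩

theorem fracPer_image_bounds (hsurj : Function.Surjective f) (hs : 0 < s)
    {E : Set (EuclideanSpace ℝ (Fin N))} (hE : MeasurableSet E) :
    ENNReal.ofReal (L⁻¹ ^ (3 * N + s)) * fracPer N s E ≤ fracPer N s (f '' E) ∧
      fracPer N s (f '' E) ≤ ENNReal.ofReal (L ^ (3 * N + s)) * fracPer N s E := by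
  have hbij : Function.Bijective f :=
    ⟨injective_of_mul_norm_sub_le (inv_pos.2 hL) fun x y => (hdist x y).1, hsurj⟩
  simp only [fracPer, ← image_compl_eq hbij]
  exact interEnergy_image_bounds hf hL hdist hs hE hE.compl

end Energy

theorem fracPer_perturbation_estimate_general (N : ℕ) (s : ℝ) (hs : s ∈ Set.Ioo (0:ℝ) 1)
    (T : EuclideanSpace ℝ (Fin N) → EuclideanSpace ℝ (Fin N))
    (hT : ContDiff ℝ 1 T) (hTc : HasCompactSupport T) :
    ∃ C > (0:ℝ), ∃ δ > (0:ℝ), ∀ t : ℝ, |t| < δ →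
      ∀ E : Set (EuclideanSpace ℝ (Fin N)), MeasurableSet E → fracPer N s E ≠ ⊤ →
        ENNReal.ofReal (1 - C * |t|) * fracPer N s E ≤
            fracPer N s ((fun x => x + t • T x) '' E) ∧
          fracPer N s ((fun x => x + t • T x) '' E) ≤
            ENNReal.ofReal (1 + C * |t|) * fracPer N s E := by
  obtain ⟨K₀, hK₀⟩ := hT.lipschitzWith_of_hasCompactSupport hTc one_ne_zero
  set K : ℝ≥0 := K₀ + 1
  have hK : LipschitzWith K T := hK₀.weaken le_self_add
  have hKpos : (0 : ℝ) < K := by positivity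
  refine ⟨2 ^ (3 * N + 2) * K, by positivity, 1 / (2 * K), by positivity,
    fun t ht E hE _ => ?_⟩
  set ε : ℝ := |t| * K
  have hε0 : 0 ≤ ε := by positivity
  have hε : ε ≤ 1 / 2 := by
    calc |t| * (K : ℝ) ≤ 1 / (2 * K) * K := by gcongr
      _ = 1 / 2 := by field_simp
  obtain ⟨hlo, hhi⟩ := fracPer_image_bounds
    (differentiable_id.add ((hT.differentiable one_ne_zero).const_smul t)) (by positivity)
    (hK.norm_add_smul_sub_bounds hε) (hK.surjective_add_smul (by linarith)) hs.1 hE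
  have hLq : (1 + 2 * ε) ^ (3 * N + s) ≤ 1 + 2 ^ (3 * N + 2) * K * |t| := by
    calc _ ≤ 1 + 2 ^ (3 * N + 1 + 1) * ε :=
          one_add_two_mul_rpow_le hε0 hε (by push_cast; linarith [hs.2])
      _ = _ := by ring
  constructor
  · refine le_trans ?_ hlo
    gcongr
    rw [Real.inv_rpow (by positivity)]
    exact one_sub_le_inv_of_le_one_add (by positivity) hLq
  · refine hhi.trans ?_
    gcongr

theorem fracPer_perturbation_estimate (N : ℕ) (hN : 0 < N) (s : ℝ) (hs : s ∈ Set.Ioo (0:ℝ) 1)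
    (T : EuclideanSpace ℝ (Fin N) → EuclideanSpace ℝ (Fin N))
    (hT : ContDiff ℝ 1 T) (hTc : HasCompactSupport T) :
    ∃ C > (0:ℝ), ∃ δ > (0:ℝ), ∀ t : ℝ, |t| < δ →
      ∀ E : Set (EuclideanSpace ℝ (Fin N)), MeasurableSet E → fracPer N s E ≠ ⊤ →
        ENNReal.ofReal (1 - C * |t|) * fracPer N s E ≤
            fracPer N s ((fun x => x + t • T x) '' E) ∧
          fracPer N s ((fun x => x + t • T x) '' E) ≤
            ENNReal.ofReal (1 + C * |t|) * fracPer N s E :=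
  fracPer_perturbation_estimate_general N s hs T hT hTc
end

section
/- Suppose (Gᵢ)_{i∈I} is a countable family of measurable sets of finite fractional perimeter with at least two of them having positive measure, and ℱ(G) = P_s(G) − ∫_G g dx with g being ℤ^N-periodic. Let (wᵢ) ⊆ ℤ^N be such that the translates Gᵢ + wᵢ are pairwise disjoint (up to null sets) with F = ∪ᵢ (Gᵢ + wᵢ). Then ℱ(F) < ∑ᵢ ℱ(Gᵢ). -/
open MeasureTheory Metric Set Filter
open scoped ENNReal NNReal symmDiff

/-- The point of `EuclideanSpace ℝ (Fin N)` with integer coordinates `w`. -/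
noncomputable def intVec (N : ℕ) (w : Fin N → ℤ) : EuclideanSpace ℝ (Fin N) :=
  (EuclideanSpace.equiv (Fin N) ℝ).symm (fun i => (w i : ℝ))

/-!
Translation by integer vectors preserves `P_s` and, by periodicity, `∫ g`, so one may work with the
translated pieces `Fᵢ` and their union `F`. As `Fᶜ ⊆ Fᵢᶜ`, the share of `Fᵢ` in `P_s(F)` is at most
`P_s(Fᵢ)`; moreover the interaction of `Fᵢ` with a second piece `Fⱼ` of positive measure is counted
in `P_s(Fᵢ)` but not in `P_s(F)`, and it is strictly positive. The integrals of the bounded `g` are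
countably additive over the a.e. disjoint pieces of finite total measure.
-/

open Function

section Translation

variable {X : Type*} [MeasurableSpace X] [AddGroup X] [MeasurableAdd X]
  (μ : Measure X) [μ.IsAddRightInvariant]

lemma measure_image_add_right (v : X) (A : Set X) : μ ((· + v) '' A) = μ A := by
  rw [image_add_right, measure_preimage_add_right]

lemma measurableSet_image_add_right (v : X) {A : Set X} (hA : MeasurableSet A) :
    MeasurableSet ((· + v) '' A) :=
  (MeasurableEquiv.addRight v).measurableSet_image.2 hA

lemma setIntegral_image_add_right_of_periodic {F : Type*} [NormedAddCommGroup F]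
    [NormedSpace ℝ F] {g : X → F} {v : X} (hg : ∀ x, g (x + v) = g x) (A : Set X) :
    ∫ x in (· + v) '' A, g x ∂μ = ∫ x in A, g x ∂μ := by
  rw [(measurePreserving_add_right μ v).setIntegral_image_emb
    (MeasurableEquiv.addRight v).measurableEmbedding]
  simp only [hg]

end Translation

lemma hasSum_setIntegral_iUnion_of_norm_le {X F ι : Type*} [MeasurableSpace X] {μ : Measure X}
    [NormedAddCommGroup F] [NormedSpace ℝ F] [Countable ι] {g : X → F}
    (hg : AEStronglyMeasurable g μ) {M : ℝ} (hM : ∀ x, ‖g x‖ ≤ M) {A : ι → Set X}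
    (hAm : ∀ i, NullMeasurableSet (A i) μ) (hd : Pairwise (AEDisjoint μ on A))
    (hμ : ∑' i, μ (A i) ≠ ∞) :
    HasSum (fun i => ∫ x in A i, g x ∂μ) (∫ x in ⋃ i, A i, g x ∂μ) :=
  hasSum_integral_iUnion_ae hAm hd <| Measure.integrableOn_of_bounded
    (ne_top_of_le_ne_top hμ (measure_iUnion_le A)) hg (ae_of_all _ hM)

section FractionalPerimeter

variable {N : ℕ} {s : ℝ}

local notation "E" => EuclideanSpace ℝ (Fin N)

lemma measurable_kernel :
    Measurable fun p : E × E => ENNReal.ofReal (1 / ‖p.1 - p.2‖ ^ ((N : ℝ) + s)) := by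
  fun_prop

lemma measurable_lintegral_kernel (B : Set E) :
    Measurable fun x : E => ∫⁻ y in B, ENNReal.ofReal (1 / ‖x - y‖ ^ ((N : ℝ) + s)) :=
  measurable_kernel.lintegral_prod_right'

lemma interEnergy_mono_right {A B B' : Set E} (h : B ⊆ B') :
    interEnergy N s A B ≤ interEnergy N s A B' :=
  lintegral_mono fun _ => lintegral_mono_set h

lemma interEnergy_union_right {A B₁ B₂ : Set E} (hB₂ : MeasurableSet B₂) (hd : Disjoint B₁ B₂) :
    interEnergy N s A (B₁ ∪ B₂) = interEnergy N s A B₁ + interEnergy N s A B₂ := by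
  simp only [interEnergy, lintegral_union hB₂ hd]
  exact lintegral_add_left (measurable_lintegral_kernel B₁) _

lemma interEnergy_iUnion_left_le {ι : Type*} [Countable ι] (A : ι → Set E) (B : Set E) :
    interEnergy N s (⋃ i, A i) B ≤ ∑' i, interEnergy N s (A i) B :=
  lintegral_iUnion_le A _

lemma interEnergy_pos {A B : Set E} (hAB : Disjoint A B) (hA : 0 < volume A) (hB : 0 < volume B) :
    0 < interEnergy N s A B := by
  have hinner : ∀ x ∉ B, 0 < ∫⁻ y in B, ENNReal.ofReal (1 / ‖x - y‖ ^ ((N : ℝ) + s)) := by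
    intro x hx
    have hk : Measurable fun y : E => ENNReal.ofReal (1 / ‖x - y‖ ^ ((N : ℝ) + s)) := by
      fun_prop
    rw [setLIntegral_pos_iff hk]
    refine hB.trans_le (measure_mono fun y hy => ⟨?_, hy⟩)
    have : 0 < ‖x - y‖ := norm_pos_iff.2 (sub_ne_zero.2 fun h => hx (h ▸ hy))
    exact (ENNReal.ofReal_pos.2 (by positivity)).ne'
  rw [interEnergy, setLIntegral_pos_iff (measurable_lintegral_kernel B)]
  exact hA.trans_le (measure_mono fun x hx => ⟨(hinner x (hAB.notMem_of_mem_left hx)).ne', hx⟩)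

lemma interEnergy_image_add_right (v : E) (A B : Set E) :
    interEnergy N s ((· + v) '' A) ((· + v) '' B) = interEnergy N s A B := by
  have hv := measurePreserving_add_right (volume : Measure E) v
  have hemb := (MeasurableEquiv.addRight v).measurableEmbedding
  simp only [interEnergy, ← hv.setLIntegral_comp_emb hemb, add_sub_add_right_eq_sub]

lemma fracPer_image_add_right (v : E) (A : Set E) :
    fracPer N s ((· + v) '' A) = fracPer N s A := by
  rw [fracPer, ← image_compl_eq (f := (· + v)) (Equiv.addRight v).bijective]
  exact interEnergy_image_add_right v A Aᶜ

lemma fracPer_iUnion_add_interEnergy_le {ι : Type*} [Countable ι] {F : ι → Set E}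
    (hFm : ∀ k, MeasurableSet (F k)) (i j : ι) :
    fracPer N s (⋃ k, F k) + interEnergy N s (F i) (F j \ F i) ≤ ∑' k, fracPer N s (F k) := by
  classical
  set U := ⋃ k, F k
  set ε := interEnergy N s (F i) (F j \ F i)
  have hUc : ∀ k, interEnergy N s (F k) Uᶜ ≤ fracPer N s (F k) := fun k =>
    interEnergy_mono_right (compl_subset_compl.2 (subset_iUnion F k))
  have hUc_add : interEnergy N s (F i) Uᶜ + ε ≤ fracPer N s (F i) := by
    rw [← interEnergy_union_right ((hFm j).diff (hFm i))
      (disjoint_compl_left.mono_right (sdiff_subset.trans (subset_iUnion F j)))]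
    exact interEnergy_mono_right
      (union_subset (compl_subset_compl.2 (subset_iUnion F i)) fun x hx => hx.2)
  calc fracPer N s U + ε
      ≤ ∑' k, (interEnergy N s (F k) Uᶜ + (Pi.single i ε : ι → ℝ≥0∞) k) := by
        rw [ENNReal.tsum_add, tsum_pi_single]
        gcongr
        exact interEnergy_iUnion_left_le F Uᶜ
    _ ≤ ∑' k, fracPer N s (F k) := ENNReal.tsum_le_tsum fun k => by
        rcases eq_or_ne k i with rfl | hk
        · simpa using hUc_add
        · simpa [hk] using hUc k

lemma toReal_fracPer_iUnion_lt {ι : Type*} [Countable ι] {F : ι → Set E}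
    (hFm : ∀ k, MeasurableSet (F k)) (hd : Pairwise (AEDisjoint volume on F))
    (hP : ∑' k, fracPer N s (F k) ≠ ∞) {i j : ι} (hij : i ≠ j)
    (hi : 0 < volume (F i)) (hj : 0 < volume (F j)) :
    (fracPer N s (⋃ k, F k)).toReal < ∑' k, (fracPer N s (F k)).toReal := by
  set ε := interEnergy N s (F i) (F j \ F i)
  have hle : fracPer N s (⋃ k, F k) + ε ≤ ∑' k, fracPer N s (F k) :=
    fracPer_iUnion_add_interEnergy_le hFm i j
  have hε : 0 < ε :=
    interEnergy_pos disjoint_sdiff_right hi (by rwa [measure_sdiff_null' (hd hij.symm)])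
  obtain ⟨hU_top, hε_top⟩ := ENNReal.add_ne_top.1 (ne_top_of_le_ne_top hP hle)
  have hle_real := ENNReal.toReal_mono hP hle
  rw [ENNReal.toReal_add hU_top hε_top,
    ENNReal.tsum_toReal_eq (ENNReal.ne_top_of_tsum_ne_top hP)] at hle_real
  linarith [ENNReal.toReal_pos hε.ne' hε_top]

end FractionalPerimeter

theorem strict_subadditivity_periodic_general (N : ℕ) (s : ℝ)
    (g : EuclideanSpace ℝ (Fin N) → ℝ) (hgmeas : Measurable g)
    (M : ℝ) (hg : ∀ x, |g x| ≤ M)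
    (hper : ∀ (x : EuclideanSpace ℝ (Fin N)) (w : Fin N → ℤ), g (x + intVec N w) = g x)
    (G : ℕ → Set (EuclideanSpace ℝ (Fin N))) (hGm : ∀ i, MeasurableSet (G i))
    (hPsum : ∑' i, fracPer N s (G i) ≠ ⊤) (hVsum : ∑' i, volume (G i) ≠ ⊤)
    (htwo : ∃ i j, i ≠ j ∧ 0 < volume (G i) ∧ 0 < volume (G j))
    (w : ℕ → Fin N → ℤ)
    (hdisj : ∀ i j, i ≠ j →
      volume (((fun x => x + intVec N (w i)) '' G i) ∩
        ((fun x => x + intVec N (w j)) '' G j)) = 0) :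
    (fracPer N s (⋃ i, (fun x => x + intVec N (w i)) '' G i)).toReal -
        ∫ x in ⋃ i, (fun x => x + intVec N (w i)) '' G i, g x <
      ∑' i, ((fracPer N s (G i)).toReal - ∫ x in G i, g x) := by
  set F := fun i => (fun x => x + intVec N (w i)) '' G i
  have hFm : ∀ i, MeasurableSet (F i) := fun i => measurableSet_image_add_right _ (hGm i)
  have hFvol : ∀ i, volume (F i) = volume (G i) := fun i => measure_image_add_right _ _ _
  have hFper : ∀ i, fracPer N s (F i) = fracPer N s (G i) := fun i => fracPer_image_add_right _ _
  obtain ⟨i, j, hij, hi, hj⟩ := htwo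
  have hper_lt : (fracPer N s (⋃ i, F i)).toReal < ∑' i, (fracPer N s (G i)).toReal := by
    simpa only [hFper] using toReal_fracPer_iUnion_lt (s := s) hFm hdisj
      (by simpa only [hFper]) hij (by rwa [hFvol]) (by rwa [hFvol])
  have hint : HasSum (fun i => ∫ x in G i, g x) (∫ x in ⋃ i, F i, g x) := by
    simpa only [F, setIntegral_image_add_right_of_periodic _ (hper · _)] using
      hasSum_setIntegral_iUnion_of_norm_le hgmeas.aestronglyMeasurable (M := M)
        (by simpa only [Real.norm_eq_abs] using hg) (fun i => (hFm i).nullMeasurableSet) hdisj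
        (by simpa only [hFvol])
  rw [((ENNReal.summable_toReal hPsum).hasSum.sub hint).tsum_eq]
  linarith

theorem strict_subadditivity_periodic (N : ℕ) (hN : 0 < N) (s : ℝ) (hs : s ∈ Set.Ioo (0:ℝ) 1)
    (g : EuclideanSpace ℝ (Fin N) → ℝ) (hgmeas : Measurable g)
    (M : ℝ) (hg : ∀ x, |g x| ≤ M)
    (hper : ∀ (x : EuclideanSpace ℝ (Fin N)) (w : Fin N → ℤ), g (x + intVec N w) = g x)
    (G : ℕ → Set (EuclideanSpace ℝ (Fin N))) (hGm : ∀ i, MeasurableSet (G i))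
    (hGfin : ∀ i, fracPer N s (G i) ≠ ⊤)
    (hPsum : ∑' i, fracPer N s (G i) ≠ ⊤) (hVsum : ∑' i, volume (G i) ≠ ⊤)
    (htwo : ∃ i j, i ≠ j ∧ 0 < volume (G i) ∧ 0 < volume (G j))
    (w : ℕ → Fin N → ℤ)
    (hdisj : ∀ i j, i ≠ j →
      volume (((fun x => x + intVec N (w i)) '' G i) ∩
        ((fun x => x + intVec N (w j)) '' G j)) = 0) :
    (fracPer N s (⋃ i, (fun x => x + intVec N (w i)) '' G i)).toReal -
        ∫ x in ⋃ i, (fun x => x + intVec N (w i)) '' G i, g x <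
      ∑' i, ((fracPer N s (G i)).toReal - ∫ x in G i, g x) :=
  strict_subadditivity_periodic_general N s g hgmeas M hg hper G hGm hPsum hVsum htwo w hdisj
end
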